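/- A matrix ŵ : Fin n → Fin m → ℝ with all entries in [0,1] is a Nash equilibrium of the weight game if and only if both of the following hold: (1) for every task q there exists an agent i that is dominating for q with ŵ i q = 1; and (2) for every task q and every agent j that is not dominating for q, ŵ j q = 0. -/

import Mathlib

open Finset Filter

noncomputable def fsMax (s : Finset ℝ) : ℝ := WithBot.unbotD 0 s.max

noncomputable def fsMin (s : Finset ℝ) : ℝ := WithTop.untopD 0 s.min

noncomputable def fsSubmax (s : Finset ℝ) : ℝ := fsMax (s.filter (fun x => x < fsMax s))

/-- Agent `i` is dominating for task `q`. -/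
def Dominating {n m : ℕ} (f : Fin n → Fin m → ℝ) (i : Fin n) (q : Fin m) : Prop :=
  ∀ j, f j q ≤ f i q

/-- Maximum of `g j` over all `j ≠ i` (0 if that set is empty). -/
noncomputable def maxErase {n : ℕ} (i : Fin n) (g : Fin n → ℝ) : ℝ :=
  fsMax ((Finset.univ.erase i).image g)

/-- Utility of agent `i` in the weight game. -/
noncomputable def Uutil {n m : ℕ} (f : Fin n → Fin m → ℝ) (w : Fin n → Fin m → ℝ)
    (i : Fin n) : ℝ :=
  ∑ q, (f i q * w i q - maxErase i (fun j => f j q * w j q) * w i q)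

/-- All entries of the matrix lie in `[0,1]`. -/
def InUnit {n m : ℕ} (w : Fin n → Fin m → ℝ) : Prop :=
  ∀ i q, w i q ∈ Set.Icc (0 : ℝ) 1

/-- Nash equilibrium of the weight game. -/
def IsNashW {n m : ℕ} (f : Fin n → Fin m → ℝ) (w : Fin n → Fin m → ℝ) : Prop :=
  ∀ i, ∀ w' : Fin m → ℝ, (∀ q, w' q ∈ Set.Icc (0 : ℝ) 1) →
    Uutil f (Function.update w i w') i ≤ Uutil f w i

/-!
Agent `i`'s utility is linear in its own row `w i`, with coefficient `f i q - M i q` on task `q`,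
where `M i q` is the highest competing bid `f j q * w j q`, `j ≠ i`, which does not depend on
`w i`. So `w` is a Nash equilibrium iff every entry is a best response of a linear function on
`[0,1]`: `w i q = 1` when agent `i` outbids its competitors, `w i q = 0` when it is outbid.
On a single task, the agent with the highest bid must then be a dominating agent bidding `1`
(otherwise a dominating agent, which has positive value, would outbid everyone and bid `1`);
its bid `max_i f i q` outbids every non-dominating agent, which therefore bids `0`.
-/

lemma le_fsMax {s : Finset ℝ} {x : ℝ} (hx : x ∈ s) : x ≤ fsMax s := by
  obtain ⟨b, hb⟩ := Finset.max_of_mem hx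
  have := Finset.le_max_of_eq hx hb
  simp_all [fsMax]

lemma fsMax_le {s : Finset ℝ} {a : ℝ} (ha : 0 ≤ a) (h : ∀ x ∈ s, x ≤ a) : fsMax s ≤ a := by
  unfold fsMax
  cases hm : s.max with
  | bot => simpa using ha
  | coe b => simpa using h b (Finset.mem_of_max hm)

section maxErase

variable {n : ℕ} {i j : Fin n} {g : Fin n → ℝ}

lemma le_maxErase (hj : j ≠ i) (g : Fin n → ℝ) : g j ≤ maxErase i g :=
  le_fsMax (Finset.mem_image_of_mem g (Finset.mem_erase.2 ⟨hj, Finset.mem_univ j⟩))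

lemma maxErase_le {a : ℝ} (ha : 0 ≤ a) (h : ∀ j, j ≠ i → g j ≤ a) : maxErase i g ≤ a :=
  fsMax_le ha <| by
    rintro _ hx
    obtain ⟨j, hj, rfl⟩ := Finset.mem_image.1 hx
    exact h j (Finset.ne_of_mem_erase hj)

lemma maxErase_congr {g' : Fin n → ℝ} (h : ∀ j, j ≠ i → g j = g' j) :
    maxErase i g = maxErase i g' :=
  congrArg fsMax <| Finset.image_congr fun j hj => h j (Finset.ne_of_mem_erase hj)

end maxErase

lemma Uutil_update {n m : ℕ} (f w : Fin n → Fin m → ℝ) (i : Fin n) (w' : Fin m → ℝ) :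
    Uutil f (Function.update w i w') i
      = ∑ q, (f i q - maxErase i (fun j => f j q * w j q)) * w' q := by
  refine Finset.sum_congr rfl fun q _ => ?_
  rw [maxErase_congr fun j hj => by rw [Function.update_of_ne hj], Function.update_self]
  ring

lemma isMaxOn_mul_Icc_iff {c x : ℝ} (hx : x ∈ Set.Icc (0 : ℝ) 1) :
    IsMaxOn (c * ·) (Set.Icc 0 1) x ↔ (0 < c → x = 1) ∧ (c < 0 → x = 0) := by
  obtain ⟨hx0, hx1⟩ := hx
  constructor
  · intro h
    have h0 : c * 0 ≤ c * x := h ⟨le_rfl, zero_le_one⟩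
    have h1 : c * 1 ≤ c * x := h ⟨zero_le_one, le_rfl⟩
    constructor
    · intro hc; nlinarith
    · intro hc; nlinarith
  · rintro ⟨hpos, hneg⟩ t ⟨ht0, ht1⟩
    show c * t ≤ c * x
    rcases lt_trichotomy c 0 with hc | rfl | hc
    · rw [hneg hc]; nlinarith
    · simp
    · rw [hpos hc]; nlinarith

lemma isMaxOn_sum_mul_pi_iff {ι : Type*} [Fintype ι] [DecidableEq ι] {c x : ι → ℝ}
    {s : Set ℝ} (hx : x ∈ Set.univ.pi fun _ => s) :
    IsMaxOn (fun y => ∑ q, c q * y q) (Set.univ.pi fun _ => s) x ↔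
      ∀ q, IsMaxOn (c q * ·) s (x q) := by
  rw [Set.mem_univ_pi] at hx
  constructor
  · intro h q t ht
    have hy : Function.update x q t ∈ Set.univ.pi fun _ => s := by
      rw [Set.mem_univ_pi]
      intro p
      rcases eq_or_ne p q with rfl | hp
      · simpa using ht
      · simpa [Function.update_of_ne hp] using hx p
    have hle : ∑ p, c p * Function.update x q t p ≤ ∑ p, c p * x p := h hy
    rw [← sub_nonpos, ← Finset.sum_sub_distrib,
      Finset.sum_eq_single q (fun p _ hp => by simp [Function.update_of_ne hp]) (by simp)] at hle
    simpa [sub_nonpos] using hle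
  · intro h y hy
    rw [Set.mem_univ_pi] at hy
    show ∑ q, c q * y q ≤ ∑ q, c q * x q
    exact Finset.sum_le_sum fun q _ => h q (hy q)

lemma isNashW_iff {n m : ℕ} {f w : Fin n → Fin m → ℝ} (hw : InUnit w) :
    IsNashW f w ↔ ∀ i q, IsMaxOn ((f i q - maxErase i (fun j => f j q * w j q)) * ·)
      (Set.Icc 0 1) (w i q) := by
  have hbox : ∀ i, w i ∈ Set.univ.pi fun _ => Set.Icc (0 : ℝ) 1 := fun i =>
    Set.mem_univ_pi.2 (hw i)
  refine forall_congr' fun i => ?_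
  rw [← isMaxOn_sum_mul_pi_iff (hbox i)]
  simp only [IsMaxOn, IsMaxFilter, Filter.eventually_principal, Set.mem_univ_pi,
    ← Uutil_update]
  rw [Function.update_eq_self]

section task

variable {n : ℕ} {a x : Fin n → ℝ}

lemma maxErase_le_of_dominating (ha : 0 ≤ a) (hx : x ≤ 1) {i : Fin n} (hi : ∀ k, a k ≤ a i)
    (j : Fin n) : maxErase j (a * x) ≤ a i :=
  maxErase_le (ha i) fun k _ => (mul_le_of_le_one_right (ha k) (hx k)).trans (hi k)

lemma maxErase_eq_of_dominating (ha : 0 ≤ a) (hx : x ≤ 1) {i j : Fin n}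
    (hi : ∀ k, a k ≤ a i) (hxi : x i = 1) (hj : j ≠ i) : maxErase j (a * x) = a i :=
  (maxErase_le_of_dominating ha hx hi j).antisymm <| by
    simpa [hxi] using le_maxErase hj.symm (a * x)

lemma exists_dominating_eq_one (ha : 0 ≤ a) (hx : x ∈ Set.Icc 0 1)
    (hnt : ∃ j, ¬ ∀ k, a k ≤ a j) (h : ∀ i, maxErase i (a * x) < a i → x i = 1) :
    ∃ i, (∀ k, a k ≤ a i) ∧ x i = 1 := by
  obtain ⟨j₀, hj₀⟩ := hnt
  obtain ⟨s, -, hs⟩ := Finset.exists_max_image Finset.univ (a * x) ⟨j₀, Finset.mem_univ j₀⟩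
  obtain ⟨d, -, hd⟩ := Finset.exists_max_image Finset.univ a ⟨j₀, Finset.mem_univ j₀⟩
  have hd_pos : 0 < a d := by
    push Not at hj₀
    obtain ⟨k, hk⟩ := hj₀
    exact (ha j₀).trans_lt (hk.trans_le (hd k (Finset.mem_univ k)))
  -- if the top agent `d` outbid everyone, it would bid fully and outbid `s` as well
  have hds : a d ≤ a s * x s := by
    by_contra! hlt
    have hxd := h d ((maxErase_le (mul_nonneg (ha s) (hx.1 s))
      fun k _ => hs k (Finset.mem_univ k)).trans_lt hlt)
    simpa [hxd] using (hs d (Finset.mem_univ d)).trans_lt hlt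
  have hsx : a s * x s ≤ a s := mul_le_of_le_one_right (ha s) (hx.2 s)
  refine ⟨s, fun k => (hd k (Finset.mem_univ k)).trans (hds.trans hsx), ?_⟩
  have hs_pos : 0 < a s := hd_pos.trans_le (hds.trans hsx)
  exact (hx.2 s).antisymm <| le_of_mul_le_mul_left
    (by simpa using (hd s (Finset.mem_univ s)).trans hds) hs_pos

lemma eq_zero_of_not_dominating {i j : Fin n} (hi : ∀ k, a k ≤ a i) (hxi : x i = 1)
    (hj : ¬ ∀ k, a k ≤ a j) (h : a j < maxErase j (a * x) → x j = 0) : x j = 0 := by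
  push Not at hj
  obtain ⟨k, hk⟩ := hj
  have hji : j ≠ i := by rintro rfl; exact hk.not_ge (hi k)
  refine h (hk.trans_le ((hi k).trans ?_))
  simpa [hxi] using le_maxErase hji.symm (a * x)

lemma bestResponse_iff_dominating_eq_one (ha : 0 ≤ a) (hx : x ∈ Set.Icc 0 1)
    (hnt : ∃ j, ¬ ∀ k, a k ≤ a j) :
    (∀ i, (maxErase i (a * x) < a i → x i = 1) ∧ (a i < maxErase i (a * x) → x i = 0)) ↔
      (∃ i, (∀ k, a k ≤ a i) ∧ x i = 1) ∧ (∀ j, (¬ ∀ k, a k ≤ a j) → x j = 0) := by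
  constructor
  · intro h
    obtain ⟨i, hi, hxi⟩ := exists_dominating_eq_one ha hx hnt fun i => (h i).1
    exact ⟨⟨i, hi, hxi⟩, fun j hj => eq_zero_of_not_dominating hi hxi hj (h j).2⟩
  · rintro ⟨⟨s, hs, hxs⟩, hzero⟩ i
    rcases eq_or_ne i s with rfl | his
    · exact ⟨fun _ => hxs, fun hlt => absurd (maxErase_le_of_dominating ha hx.2 hs i) hlt.not_ge⟩
    · rw [maxErase_eq_of_dominating ha hx.2 hs hxs his]
      exact ⟨fun hlt => absurd (hs i) hlt.not_ge,
        fun hlt => hzero i fun hi => (hi s).not_gt hlt⟩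

end task

theorem nash_weight_game_characterization {n m : ℕ} (f : Fin n → Fin m → ℝ)
    (hf : ∀ i q, 0 ≤ f i q)
    (hnt : ∀ q : Fin m, ∃ j : Fin n, ¬ Dominating f j q)
    (what : Fin n → Fin m → ℝ) (hwhat : InUnit what) :
    IsNashW f what ↔
      ((∀ q, ∃ i, Dominating f i q ∧ what i q = 1) ∧
        (∀ q, ∀ j, ¬ Dominating f j q → what j q = 0)) := by
  rw [isNashW_iff hwhat, forall_comm, ← forall_and]
  refine forall_congr' fun q => ?_
  simp only [isMaxOn_mul_Icc_iff (hwhat _ q), sub_pos, sub_neg]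
  exact bestResponse_iff_dominating_eq_one (fun i => hf i q)
    ⟨fun i => (hwhat i q).1, fun i => (hwhat i q).2⟩ (hnt q)
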